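/- The homogeneous ideal (x0^2, x0·x1, x0·f, g) in k[x0,x1,x2,x3], where f = f(x2,x3) is a nonzero quadric and g is a nonzero quartic in the ideal (x1^2, x1·f, f^2) not divisible by x0, contains exactly 19 linearly independent quartic forms. -/

import Mathlib

/-!
Write `J = (x₀², x₀x₁)`. A quartic `j + a·x₀f + b·g` of the ideal (`j ∈ J`) has degree-4 part
`j₄ + l·x₀f + c·g` with `l` linear and `c` a constant, and `x₀·x₀f, x₁·x₀f ∈ J`; so the quartics
of the ideal are `J₄ + x₀f·⟨x₂, x₃⟩ + k·g`. Since `J` is a monomial ideal, `J₄` is spanned by the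
16 quartic monomials divisible by `x₀²` or `x₀x₁`. As `f` involves only `x₂, x₃`, every monomial
of `x₀f·⟨x₂, x₃⟩` has `x₀`-degree exactly one and no `x₁`, so this 2-dimensional space meets `J₄`
trivially; both lie in `(x₀)`, which does not contain `g`. Hence the dimension is `16 + 2 + 1`.
-/

open MvPolynomial

namespace MvPolynomial

section

variable {σ R : Type*} [CommSemiring R]

theorem homogeneousComponent_mul_of_isHomogeneous {q : MvPolynomial σ R} {a m n : ℕ}
    (hq : q.IsHomogeneous a) (hm : n + a = m) (p : MvPolynomial σ R) :
    homogeneousComponent m (p * q) = homogeneousComponent n p * q := by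
  subst hm
  induction p using MvPolynomial.induction_on' with
  | monomial d c =>
    have hd := isHomogeneous_monomial (R := R) c (rfl : d.degree = d.degree)
    rw [homogeneousComponent_of_mem (hd.mul hq), homogeneousComponent_of_mem hd]
    by_cases h : d.degree = n <;> simp [h]
  | add p p' hp hp' => simp only [add_mul, map_add, hp, hp']

theorem restrictScalars_span_monomial_image (s : Set (σ →₀ ℕ)) :
    (Ideal.span ((monomial · (1 : R)) '' s)).restrictScalars R =
      restrictSupport R {d | ∃ e ∈ s, e ≤ d} := by
  ext p
  rw [Submodule.restrictScalars_mem, mem_ideal_span_monomial_image, mem_restrictSupport_iff]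
  rfl

theorem restrictSupport_inf_homogeneousSubmodule (s : Set (σ →₀ ℕ)) (n : ℕ) :
    restrictSupport R s ⊓ homogeneousSubmodule σ R n =
      restrictSupport R (s ∩ {d | d.degree = n}) := by
  ext p
  rw [Submodule.mem_inf, homogeneousSubmodule_eq_finsupp_supported]
  exact Set.subset_inter_iff.symm

theorem homogeneousComponent_mem_restrictSupport_inter {s : Set (σ →₀ ℕ)}
    {p : MvPolynomial σ R} (hp : p ∈ restrictSupport R s) (n : ℕ) :
    homogeneousComponent n p ∈ restrictSupport R (s ∩ {d | d.degree = n}) := by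
  rw [mem_restrictSupport_iff, support_homogeneousComponent, Finset.coe_filter]
  exact fun d hd => ⟨hp hd.1, hd.2⟩

theorem disjoint_restrictSupport {s t : Set (σ →₀ ℕ)} (h : Disjoint s t) :
    Disjoint (restrictSupport R s) (restrictSupport R t) := by
  rw [Submodule.disjoint_def]
  intro p hs ht
  rw [← support_eq_empty, ← Finset.coe_eq_empty, ← Set.subset_empty_iff, ← h.inter_eq]
  exact Set.subset_inter hs ht

theorem finrank_restrictSupport [StrongRankCondition R] (s : Set (σ →₀ ℕ)) :
    Module.finrank R (restrictSupport R s) = Nat.card s :=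
  Module.finrank_eq_nat_card_basis (basisRestrictSupport R s)

noncomputable def homogeneousPart (I : Ideal (MvPolynomial σ R)) (n : ℕ) :
    Submodule R (MvPolynomial σ R) :=
  I.restrictScalars R ⊓ homogeneousSubmodule σ R n

theorem homogeneousPart_span_monomial_image (s : Set (σ →₀ ℕ)) (n : ℕ) :
    homogeneousPart (Ideal.span ((monomial · (1 : R)) '' s)) n =
      restrictSupport R ({d | ∃ e ∈ s, e ≤ d} ∩ {d | d.degree = n}) := by
  rw [homogeneousPart, restrictScalars_span_monomial_image,
    restrictSupport_inf_homogeneousSubmodule]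

theorem homogeneousComponent_mem_homogeneousPart_span_monomial_image {s : Set (σ →₀ ℕ)}
    {p : MvPolynomial σ R} (hp : p ∈ Ideal.span ((monomial · (1 : R)) '' s)) (n : ℕ) :
    homogeneousComponent n p ∈ homogeneousPart (Ideal.span ((monomial · (1 : R)) '' s)) n := by
  rw [homogeneousPart_span_monomial_image]
  rw [← Submodule.restrictScalars_mem R, restrictScalars_span_monomial_image] at hp
  exact homogeneousComponent_mem_restrictSupport_inter hp n

theorem ideal_span_X_sq_X_mul_X (i j : σ) :
    Ideal.span {X i ^ 2, X i * X j} =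
      Ideal.span ((monomial · (1 : R)) '' {Finsupp.single i 2,
        Finsupp.single i 1 + Finsupp.single j 1}) := by
  rw [X_pow_eq_monomial]
  simp only [Set.image_insert_eq, Set.image_singleton, X, monomial_mul, one_mul]

end

end MvPolynomial

theorem Submodule.finrank_sup_of_disjoint {K V : Type*} [DivisionRing K] [AddCommGroup V]
    [Module K V] {s t : Submodule K V} [FiniteDimensional K s] [FiniteDimensional K t]
    (h : Disjoint s t) :
    Module.finrank K ↥(s ⊔ t) = Module.finrank K s + Module.finrank K t := by
  have := Submodule.finrank_sup_add_finrank_inf_eq s t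
  rwa [h.eq_bot, finrank_bot, add_zero] at this

open Finsupp in
theorem card_quarticExponents_X0sq_X0X1 :
    Nat.card ↥({d : Fin 4 →₀ ℕ | ∃ e ∈ ({single 0 2, single 0 1 + single 1 1} : Set _), e ≤ d}
      ∩ {d | d.degree = 4}) = 16 := by
  have hexp : {d : Fin 4 →₀ ℕ | d.degree = 4} ∩
      {d | ∃ e ∈ ({single 0 2, single 0 1 + single 1 1} : Set _), e ≤ d} =
        ↑(((Finset.Nat.antidiagonalTuple 4 4).filter
          (fun v : Fin 4 → ℕ => 2 ≤ v 0 ∨ (1 ≤ v 0 ∧ 1 ≤ v 1))).map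
            equivFunOnFinite.symm.toEmbedding) := by
    ext d
    simp [degree_eq_sum, le_def, Fin.forall_fin_succ, Finset.Nat.mem_antidiagonalTuple]
  rw [Set.inter_comm, hexp, Nat.card_coe_set_eq, Set.ncard_coe_finset, Finset.card_map]
  decide

section

variable {k : Type*} [Field k]

theorem finrank_homogeneousPart_X0sq_X0X1 :
    Module.finrank k (homogeneousPart
      (Ideal.span {X 0 ^ 2, X 0 * X 1} : Ideal (MvPolynomial (Fin 4) k)) 4) = 16 := by
  rw [ideal_span_X_sq_X_mul_X, homogeneousPart_span_monomial_image, finrank_restrictSupport,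
    card_quarticExponents_X0sq_X0X1]

noncomputable def x0fMulLinearX2X3 (f : MvPolynomial (Fin 4) k) :
    Submodule k (MvPolynomial (Fin 4) k) :=
  (restrictSupport k {Finsupp.single 2 1, Finsupp.single 3 1}).map
    (LinearMap.mulRight k (X 0 * f))

theorem finrank_x0fMulLinearX2X3 {f : MvPolynomial (Fin 4) k} (hf0 : f ≠ 0) :
    Module.finrank k (x0fMulLinearX2X3 f) = 2 := by
  have hinj : Function.Injective (LinearMap.mulRight k (X 0 * f)) :=
    mul_left_injective₀ (mul_ne_zero (X_ne_zero 0) hf0)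
  rw [x0fMulLinearX2X3, ← LinearEquiv.finrank_eq (Submodule.equivMapOfInjective _ hinj _),
    finrank_restrictSupport, Nat.card_coe_set_eq, Set.ncard_pair]
  exact fun h => absurd (Finsupp.single_left_injective one_ne_zero h) (by decide)

theorem x0fMulLinearX2X3_le_restrictSupport {f : MvPolynomial (Fin 4) k}
    (hfvars : ∀ m ∈ f.support, m 0 = 0 ∧ m 1 = 0) :
    x0fMulLinearX2X3 f ≤ restrictSupport k {d | d 0 = 1 ∧ d 1 = 0} := by
  rintro _ ⟨l, hl, rfl⟩
  have hX0 : (X 0 : MvPolynomial (Fin 4) k) ∈ restrictSupport k {Finsupp.single 0 1} := by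
    simp [X]
  have hf : f ∈ restrictSupport k {d | d 0 = 0 ∧ d 1 = 0} := fun d hd => hfvars d hd
  have hprod := Submodule.mul_mem_mul hX0 (Submodule.mul_mem_mul hl hf)
  rw [← restrictSupport_add, ← restrictSupport_add, ← mul_left_comm] at hprod
  refine restrictSupport_mono k ?_ hprod
  rintro _ ⟨_, rfl, _, ⟨a, ha, b, ⟨hb0, hb1⟩, rfl⟩, rfl⟩
  rcases ha with rfl | rfl <;> simp [hb0, hb1]

theorem disjoint_homogeneousPart_x0fMulLinearX2X3 {f : MvPolynomial (Fin 4) k}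
    (hfvars : ∀ m ∈ f.support, m 0 = 0 ∧ m 1 = 0) :
    Disjoint (homogeneousPart (Ideal.span {X 0 ^ 2, X 0 * X 1}) 4) (x0fMulLinearX2X3 f) := by
  rw [ideal_span_X_sq_X_mul_X, homogeneousPart_span_monomial_image]
  refine (disjoint_restrictSupport ?_).mono_right (x0fMulLinearX2X3_le_restrictSupport hfvars)
  rw [Set.disjoint_left]
  rintro d ⟨⟨e, he, hed⟩, -⟩ ⟨hd0, hd1⟩
  rcases he with rfl | rfl
  · simpa [hd0] using Finsupp.le_def.1 hed 0
  · simpa [hd1] using Finsupp.le_def.1 hed 1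

theorem homogeneousPart_sup_x0fMulLinearX2X3_le_span_X0 (f : MvPolynomial (Fin 4) k) :
    homogeneousPart (Ideal.span {X 0 ^ 2, X 0 * X 1}) 4 ⊔ x0fMulLinearX2X3 f ≤
      (Ideal.span {X 0}).restrictScalars k := by
  refine sup_le (inf_le_left.trans ?_) ?_
  · refine fun p (hp : p ∈ Ideal.span _) => Ideal.span_le.2 ?_ hp
    rintro _ (rfl | rfl) <;> rw [SetLike.mem_coe, Ideal.mem_span_singleton]
    exacts [dvd_pow_self _ two_ne_zero, dvd_mul_right _ _]
  · rintro _ ⟨l, -, rfl⟩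
    exact Ideal.mem_span_singleton.2 ((dvd_mul_right _ _).mul_left _)

theorem mul_x0f_mem_of_isHomogeneous_one {f l : MvPolynomial (Fin 4) k}
    (hf2 : f.IsHomogeneous 2) (hl : l.IsHomogeneous 1) :
    l * (X 0 * f) ∈
      homogeneousPart (Ideal.span {X 0 ^ 2, X 0 * X 1}) 4 ⊔ x0fMulLinearX2X3 f := by
  have hx0f : (X 0 * f).IsHomogeneous 3 := (isHomogeneous_X k 0).mul hf2
  suffices Submodule.span k (Set.range X) ≤
      (homogeneousPart (Ideal.span {X 0 ^ 2, X 0 * X 1}) 4 ⊔ x0fMulLinearX2X3 f).comap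
        (LinearMap.mulRight k (X 0 * f)) by
    rw [← mem_homogeneousSubmodule, homogeneousSubmodule_one_eq_span_X] at hl
    exact this hl
  rw [Submodule.span_le]
  rintro _ ⟨i, rfl⟩
  fin_cases i
  · refine Submodule.mem_sup_left ⟨?_, (isHomogeneous_X k 0).mul hx0f⟩
    change X 0 * (X 0 * f) ∈ Ideal.span _
    rw [show X 0 * (X 0 * f) = f * X 0 ^ 2 by ring]
    exact Ideal.mul_mem_left _ _ (Ideal.subset_span (by simp))
  · refine Submodule.mem_sup_left ⟨?_, (isHomogeneous_X k 1).mul hx0f⟩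
    change X 1 * (X 0 * f) ∈ Ideal.span _
    rw [show X 1 * (X 0 * f) = f * (X 0 * X 1) by ring]
    exact Ideal.mul_mem_left _ _ (Ideal.subset_span (by simp))
  · exact Submodule.mem_sup_right ⟨X 2, by simp [X], rfl⟩
  · exact Submodule.mem_sup_right ⟨X 3, by simp [X], rfl⟩

theorem homogeneousPart_span_eq_sup {f g : MvPolynomial (Fin 4) k}
    (hf2 : f.IsHomogeneous 2) (hg4 : g.IsHomogeneous 4) :
    homogeneousPart (Ideal.span {X 0 ^ 2, X 0 * X 1, X 0 * f, g}) 4 =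
      homogeneousPart (Ideal.span {X 0 ^ 2, X 0 * X 1}) 4 ⊔ x0fMulLinearX2X3 f ⊔
        Submodule.span k {g} := by
  have hI : Ideal.span {X 0 ^ 2, X 0 * X 1, X 0 * f, g} =
      Ideal.span {X 0 ^ 2, X 0 * X 1} ⊔ Ideal.span {X 0 * f, g} := by
    rw [← Ideal.span_union, Set.insert_union, Set.singleton_union]
  have hx0f : (X 0 * f).IsHomogeneous 3 := (isHomogeneous_X k 0).mul hf2
  apply le_antisymm
  · rintro p ⟨hpI, hp4⟩
    change p ∈ Ideal.span _ at hpI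
    rw [hI, Submodule.mem_sup] at hpI
    obtain ⟨j, hj, _, hy, rfl⟩ := hpI
    obtain ⟨a, b, rfl⟩ := Ideal.mem_span_pair.1 hy
    rw [← homogeneousComponent_eq_self hp4, map_add, map_add,
      homogeneousComponent_mul_of_isHomogeneous hx0f (n := 1) rfl,
      homogeneousComponent_mul_of_isHomogeneous hg4 (n := 0) rfl, homogeneousComponent_zero,
      ← smul_eq_C_mul]
    refine add_mem ?_ (add_mem ?_ ?_)
    · rw [ideal_span_X_sq_X_mul_X] at hj ⊢
      exact Submodule.mem_sup_left (Submodule.mem_sup_left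
        (homogeneousComponent_mem_homogeneousPart_span_monomial_image hj 4))
    · exact Submodule.mem_sup_left (mul_x0f_mem_of_isHomogeneous_one hf2
        (homogeneousComponent_isHomogeneous 1 a))
    · exact Submodule.mem_sup_right (Submodule.smul_mem _ _ (Submodule.mem_span_singleton_self g))
  · refine sup_le (sup_le ?_ ?_) ?_
    · refine inf_le_inf_right _ fun p hp => ?_
      change p ∈ Ideal.span _
      rw [hI]
      exact Ideal.mem_sup_left hp
    · rintro _ ⟨l, hl, rfl⟩
      have hl1 : l.IsHomogeneous 1 := by
        rw [← mem_homogeneousSubmodule, homogeneousSubmodule_eq_finsupp_supported]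
        exact restrictSupport_mono k (by rintro _ (rfl | rfl) <;> simp) hl
      exact ⟨Ideal.mul_mem_left _ l (Ideal.subset_span (by simp)), hl1.mul hx0f⟩
    · rw [Submodule.span_singleton_le_iff_mem]
      exact ⟨Ideal.subset_span (by simp), hg4⟩

end

theorem stmt15_general {k : Type*} [Field k] (f g : MvPolynomial (Fin 4) k)
    (hf2 : f.IsHomogeneous 2) (hf0 : f ≠ 0)
    (hfvars : ∀ m ∈ f.support, m 0 = 0 ∧ m 1 = 0)
    (hg4 : g.IsHomogeneous 4) (hg0 : g ≠ 0)
    (hgx0 : ¬ (X 0 : MvPolynomial (Fin 4) k) ∣ g) :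
    Module.finrank k
      ↥(Submodule.restrictScalars k
          (Ideal.span {(X 0) ^ 2, X 0 * X 1, X 0 * f, g}) ⊓
        homogeneousSubmodule (Fin 4) k 4) = 19 := by
  have hQW := disjoint_homogeneousPart_x0fMulLinearX2X3 hfvars
  have hg : Disjoint (homogeneousPart (Ideal.span {X 0 ^ 2, X 0 * X 1} :
      Ideal (MvPolynomial (Fin 4) k)) 4 ⊔ x0fMulLinearX2X3 f)
      (Submodule.span k {g}) :=
    (Submodule.disjoint_span_singleton' hg0).2 fun hmem =>
      hgx0 (Ideal.mem_span_singleton.1 (homogeneousPart_sup_x0fMulLinearX2X3_le_span_X0 f hmem))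
  have : FiniteDimensional k (homogeneousPart (Ideal.span {X 0 ^ 2, X 0 * X 1} :
      Ideal (MvPolynomial (Fin 4) k)) 4) :=
    Module.finite_of_finrank_pos (by rw [finrank_homogeneousPart_X0sq_X0X1]; norm_num)
  have : FiniteDimensional k (x0fMulLinearX2X3 f) :=
    Module.finite_of_finrank_pos (by rw [finrank_x0fMulLinearX2X3 hf0]; norm_num)
  show Module.finrank k (homogeneousPart (Ideal.span {X 0 ^ 2, X 0 * X 1, X 0 * f, g}) 4) = 19
  rw [homogeneousPart_span_eq_sup hf2 hg4, Submodule.finrank_sup_of_disjoint hg,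
    Submodule.finrank_sup_of_disjoint hQW, finrank_homogeneousPart_X0sq_X0X1,
    finrank_x0fMulLinearX2X3 hf0, finrank_span_singleton hg0]

/-- The ideal (x0², x0·x1, x0·f, g) in k[x0,x1,x2,x3], with f a nonzero quadric in x2, x3 and
g a nonzero quartic in (x1², x1·f, f²) not divisible by x0, contains exactly 19 linearly
independent quartic forms. -/
theorem stmt15 {k : Type*} [Field k] (f g : MvPolynomial (Fin 4) k)
    (hf2 : f.IsHomogeneous 2) (hf0 : f ≠ 0)
    (hfvars : ∀ m ∈ f.support, m 0 = 0 ∧ m 1 = 0)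
    (hg4 : g.IsHomogeneous 4) (hg0 : g ≠ 0)
    (hgmem : g ∈ Ideal.span {(X 1) ^ 2, X 1 * f, f ^ 2})
    (hgx0 : ¬ (X 0 : MvPolynomial (Fin 4) k) ∣ g) :
    Module.finrank k
      ↥(Submodule.restrictScalars k
          (Ideal.span {(X 0) ^ 2, X 0 * X 1, X 0 * f, g}) ⊓
        homogeneousSubmodule (Fin 4) k 4) = 19 :=
  stmt15_general f g hf2 hf0 hfvars hg4 hg0 hgx0
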